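/- Let z ∈ (0,1), let P be a set of n points in ℝ^d, let w : P → [0,∞) be a weight function, and let M be an invertible d×d real matrix such that for every x ∈ ℝ^d, ‖Mx‖₂^z ≤ ∑_{q∈P} w(q)·|qᵀx|^z and ∑_{q∈P} w(q)^{1/z}·|qᵀx| ≤ √d·‖Mx‖₂. Then the total sensitivity satisfies ∑_{p∈P} sup_{x : ∑_{q∈P} w(q)|qᵀx|^z > 0} w(p)·|pᵀx|^z / ∑_{q∈P} w(q)·|qᵀx|^z ≤ n^{1−z}·d^{z/2 + 1}. -/

import Mathlib

/-!
Write `N = M⁻¹` and `a_p = w(p)^(1/z) ‖pᵀN‖₂`. Since `pᵀx = (pᵀN)(Mx)`, Cauchy–Schwarz together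
with `‖Mx‖₂^z ≤ ∑_q w(q)|qᵀx|^z` bounds the sensitivity of `p` by `a_p^z`. Testing the upper
bound at the columns `x = N eᵢ` bounds every column sum `∑_p w(p)^(1/z) |(pᵀN)ᵢ|` by `√d`, so
`∑_p a_p ≤ ∑_p ‖w(p)^(1/z) pᵀN‖₁ ≤ d√d`. Concavity of `t ↦ t^z` then gives
`∑_p a_p^z ≤ n^(1-z) (∑_p a_p)^z ≤ n^(1-z) d^(3z/2) ≤ n^(1-z) d^(z/2+1)`.
-/

open Matrix

/-- The Euclidean (`ℓ₂`) norm of a vector in `ℝ^d`. -/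
noncomputable def l2 {d : ℕ} (x : Fin d → ℝ) : ℝ := Real.sqrt (∑ i, x i ^ 2)

open Finset

noncomputable def lzSensitivity {d : ℕ} (z : ℝ) (P : Finset (Fin d → ℝ))
    (w : (Fin d → ℝ) → ℝ) (p : Fin d → ℝ) : ℝ :=
  ⨆ x : {x : Fin d → ℝ // 0 < ∑ q ∈ P, w q * |∑ i, q i * x i| ^ z},
    w p * |∑ i, p i * (x : Fin d → ℝ) i| ^ z / ∑ q ∈ P, w q * |∑ i, q i * (x : Fin d → ℝ) i| ^ z

theorem Real.sum_rpow_le_card_rpow_mul_rpow_sum {ι : Type*} (s : Finset ι) {f : ι → ℝ}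
    (hf : ∀ i ∈ s, 0 ≤ f i) {z : ℝ} (hz0 : 0 ≤ z) (hz1 : z ≤ 1) :
    ∑ i ∈ s, f i ^ z ≤ (#s : ℝ) ^ (1 - z) * (∑ i ∈ s, f i) ^ z := by
  rcases s.eq_empty_or_nonempty with rfl | hs
  · simp only [sum_empty, card_empty, Nat.cast_zero]
    positivity
  have hn : (0 : ℝ) < #s := by exact_mod_cast hs.card_pos
  have jensen := (Real.concaveOn_rpow hz0 hz1).le_map_sum (t := s) (w := fun _ => (#s : ℝ)⁻¹)
    (fun _ _ => by positivity) (by simp [hn.ne']) hf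
  simp only [smul_eq_mul, ← mul_sum] at jensen
  rw [Real.mul_rpow (by positivity) (sum_nonneg hf), Real.inv_rpow hn.le, inv_mul_le_iff₀ hn]
    at jensen
  calc ∑ i ∈ s, f i ^ z ≤ #s * (((#s : ℝ) ^ z)⁻¹ * (∑ i ∈ s, f i) ^ z) := jensen
    _ = (#s : ℝ) ^ (1 - z) * (∑ i ∈ s, f i) ^ z := by
      rw [Real.rpow_sub hn, Real.rpow_one]
      ring

section l2

variable {d : ℕ}

lemma l2_nonneg (x : Fin d → ℝ) : 0 ≤ l2 x := Real.sqrt_nonneg _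

lemma abs_dotProduct_le_l2_mul_l2 (u v : Fin d → ℝ) : |u ⬝ᵥ v| ≤ l2 u * l2 v := by
  rw [← Real.sqrt_sq_eq_abs, l2, l2, ← Real.sqrt_mul (by positivity)]
  exact Real.sqrt_le_sqrt (sum_mul_sq_le_sq_mul_sq _ _ _)

lemma l2_le_sum_abs (x : Fin d → ℝ) : l2 x ≤ ∑ i, |x i| := by
  rw [l2, Real.sqrt_le_left (by positivity)]
  simpa [sq_abs] using sum_sq_le_sq_sum_of_nonneg (f := fun i => |x i|) fun i _ => abs_nonneg _

lemma l2_single_one (i : Fin d) : l2 (Pi.single i (1 : ℝ)) = 1 := by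
  simp [l2, Pi.single_apply]

end l2

section duality

variable {d : ℕ} {M : Matrix (Fin d) (Fin d) ℝ}

lemma abs_dotProduct_le_l2_vecMul_inv_mul_l2_mulVec (hM : IsUnit M) (p x : Fin d → ℝ) :
    |p ⬝ᵥ x| ≤ l2 (p ᵥ* M⁻¹) * l2 (M *ᵥ x) := by
  have hdual : p ⬝ᵥ x = (p ᵥ* M⁻¹) ⬝ᵥ (M *ᵥ x) := by
    rw [← dotProduct_mulVec, mulVec_mulVec, nonsing_inv_mul _ ((isUnit_iff_isUnit_det M).mp hM),
      one_mulVec]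
  rw [hdual]
  exact abs_dotProduct_le_l2_mul_l2 _ _

lemma lzSensitivity_le {z : ℝ} (hz : 0 < z) {P : Finset (Fin d → ℝ)} {w : (Fin d → ℝ) → ℝ}
    {p : Fin d → ℝ} (hwp : 0 ≤ w p) (hM : IsUnit M)
    (hlow : ∀ x, l2 (M *ᵥ x) ^ z ≤ ∑ q ∈ P, w q * |q ⬝ᵥ x| ^ z) :
    lzSensitivity z P w p ≤ (w p ^ (1 / z) * l2 (p ᵥ* M⁻¹)) ^ z := by
  have ha : 0 ≤ w p ^ (1 / z) * l2 (p ᵥ* M⁻¹) := mul_nonneg (by positivity) (l2_nonneg _)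
  refine Real.iSup_le (fun ⟨x, hx⟩ => ?_) (by positivity)
  rw [div_le_iff₀ hx]
  calc w p * |p ⬝ᵥ x| ^ z = (w p ^ (1 / z) * |p ⬝ᵥ x|) ^ z := by
        rw [Real.mul_rpow (by positivity) (abs_nonneg _), ← Real.rpow_mul hwp,
          one_div_mul_cancel hz.ne', Real.rpow_one]
    _ ≤ (w p ^ (1 / z) * l2 (p ᵥ* M⁻¹) * l2 (M *ᵥ x)) ^ z := by
        rw [mul_assoc]
        gcongr
        exact abs_dotProduct_le_l2_vecMul_inv_mul_l2_mulVec hM p x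
    _ = (w p ^ (1 / z) * l2 (p ᵥ* M⁻¹)) ^ z * l2 (M *ᵥ x) ^ z :=
        Real.mul_rpow ha (l2_nonneg _)
    _ ≤ (w p ^ (1 / z) * l2 (p ᵥ* M⁻¹)) ^ z * ∑ q ∈ P, w q * |q ⬝ᵥ x| ^ z :=
        mul_le_mul_of_nonneg_left (hlow x) (by positivity)

lemma sum_mul_l2_vecMul_inv_le {P : Finset (Fin d → ℝ)} {v : (Fin d → ℝ) → ℝ}
    (hv : ∀ p ∈ P, 0 ≤ v p) (hM : IsUnit M) {C : ℝ}
    (hup : ∀ x, ∑ q ∈ P, v q * |q ⬝ᵥ x| ≤ C * l2 (M *ᵥ x)) :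
    ∑ p ∈ P, v p * l2 (p ᵥ* M⁻¹) ≤ d * C := by
  have hcol (i : Fin d) : ∑ p ∈ P, v p * |(p ᵥ* M⁻¹) i| ≤ C := by
    simpa only [dotProduct_mulVec, dotProduct_single_one, mulVec_mulVec,
      mul_nonsing_inv _ ((isUnit_iff_isUnit_det M).mp hM), one_mulVec, l2_single_one, mul_one]
      using hup (M⁻¹ *ᵥ Pi.single i 1)
  calc ∑ p ∈ P, v p * l2 (p ᵥ* M⁻¹) ≤ ∑ p ∈ P, ∑ i, v p * |(p ᵥ* M⁻¹) i| := by
        gcongr with p hp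
        rw [← mul_sum]
        exact mul_le_mul_of_nonneg_left (l2_le_sum_abs _) (hv p hp)
    _ = ∑ i, ∑ p ∈ P, v p * |(p ᵥ* M⁻¹) i| := sum_comm
    _ ≤ ∑ _i : Fin d, C := sum_le_sum fun i _ => hcol i
    _ = d * C := by simp

end duality

lemma natCast_mul_sqrt_rpow_le (d : ℕ) {z : ℝ} (hz0 : 0 < z) (hz1 : z ≤ 1) :
    ((d : ℝ) * √d) ^ z ≤ (d : ℝ) ^ (z / 2 + 1) := by
  rcases Nat.eq_zero_or_pos d with rfl | hd
  · rw [Nat.cast_zero, zero_mul, Real.zero_rpow hz0.ne']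
    positivity
  have hd1 : (1 : ℝ) ≤ d := by exact_mod_cast hd
  rw [Real.sqrt_eq_rpow, ← Real.rpow_one_add' (by positivity) (by norm_num),
    ← Real.rpow_mul (by positivity)]
  exact Real.rpow_le_rpow_of_exponent_le hd1 (by linarith)

/-- Total sensitivity bound for `ℓ_z`-regression, `z ∈ (0,1)`: if `M` is an invertible
matrix with `‖Mx‖₂^z ≤ ∑_{q∈P} w(q)|qᵀx|^z` and `∑_{q∈P} w(q)^(1/z)|qᵀx| ≤ √d·‖Mx‖₂`
for every `x`, then the sum of the weighted sensitivities is at most `n^(1−z)·d^(z/2+1)`. -/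
theorem lz_total_sensitivity_small_z {d n : ℕ} (z : ℝ) (hz : z ∈ Set.Ioo (0 : ℝ) 1)
    (P : Finset (Fin d → ℝ)) (hcard : P.card = n)
    (w : (Fin d → ℝ) → ℝ) (hw : ∀ p ∈ P, 0 ≤ w p)
    (M : Matrix (Fin d) (Fin d) ℝ) (hM : IsUnit M)
    (hMlow : ∀ x : Fin d → ℝ, l2 (M.mulVec x) ^ z ≤ ∑ q ∈ P, w q * |∑ i, q i * x i| ^ z)
    (hMup : ∀ x : Fin d → ℝ,
      ∑ q ∈ P, w q ^ (1 / z) * |∑ i, q i * x i| ≤ Real.sqrt d * l2 (M.mulVec x)) :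
    ∑ p ∈ P,
      (⨆ x : {x : Fin d → ℝ // 0 < ∑ q ∈ P, w q * |∑ i, q i * x i| ^ z},
        w p * |∑ i, p i * (x : Fin d → ℝ) i| ^ z /
          ∑ q ∈ P, w q * |∑ i, q i * (x : Fin d → ℝ) i| ^ z) ≤
    (n : ℝ) ^ (1 - z) * (d : ℝ) ^ (z / 2 + 1) := by
  obtain ⟨hz0, hz1⟩ := hz
  set a : (Fin d → ℝ) → ℝ := fun p => w p ^ (1 / z) * l2 (p ᵥ* M⁻¹)
  have ha (p) (hp : p ∈ P) : 0 ≤ a p := mul_nonneg (Real.rpow_nonneg (hw p hp) _) (l2_nonneg _)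
  calc ∑ p ∈ P, lzSensitivity z P w p ≤ ∑ p ∈ P, a p ^ z :=
        sum_le_sum fun p hp => lzSensitivity_le hz0 (hw p hp) hM hMlow
    _ ≤ (n : ℝ) ^ (1 - z) * (∑ p ∈ P, a p) ^ z := hcard ▸
        Real.sum_rpow_le_card_rpow_mul_rpow_sum P ha hz0.le hz1.le
    _ ≤ (n : ℝ) ^ (1 - z) * ((d : ℝ) * √d) ^ z := by
        gcongr
        · exact sum_nonneg ha
        · exact sum_mul_l2_vecMul_inv_le (fun p hp => Real.rpow_nonneg (hw p hp) _) hM hMup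
    _ ≤ (n : ℝ) ^ (1 - z) * (d : ℝ) ^ (z / 2 + 1) := by
        gcongr
        exact natCast_mul_sqrt_rpow_le d hz0 hz1.le
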